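/- Let A and B be associative rings with identity, f : A → B a ring homomorphism, and J a proper two-sided ideal of B. Assume the ideal f⁻¹(J) of A is semicommutative, i.e., for all a, b ∈ f⁻¹(J), ab = 0 implies a·f⁻¹(J)·b = 0. If the subring f(A)+J of B is a weak Armendariz ring, then the amalgamation A⋈fJ is a weak Armendariz ring. -/

import Mathlib

open Polynomial

/-- A ring `R` is Armendariz if whenever `p * q = 0` for polynomials over `R`,
every product of a coefficient of `p` with a coefficient of `q` is zero. -/
def IsArmendariz (R : Type*) [Ring R] : Prop :=
  ∀ p q : R[X], p * q = 0 → ∀ i j : ℕ, p.coeff i * q.coeff j = 0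

/-- A ring `R` is nil-Armendariz if whenever every coefficient of `p * q` is nilpotent,
every product of a coefficient of `p` with a coefficient of `q` is nilpotent. -/
def IsNilArmendariz (R : Type*) [Ring R] : Prop :=
  ∀ p q : R[X], (∀ k : ℕ, IsNilpotent ((p * q).coeff k)) →
    ∀ i j : ℕ, IsNilpotent (p.coeff i * q.coeff j)

/-- A ring `R` is weak Armendariz if whenever `p * q = 0` for polynomials over `R`,
every product of a coefficient of `p` with a coefficient of `q` is nilpotent. -/
def IsWeakArmendariz (R : Type*) [Ring R] : Prop :=
  ∀ p q : R[X], p * q = 0 → ∀ i j : ℕ, IsNilpotent (p.coeff i * q.coeff j)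

/-- The amalgamation `A ⋈^f J = {(a, f a + j) | a ∈ A, j ∈ J}` of `A` and `B` along the
two-sided ideal `J` with respect to `f`, as a subring of `A × B`.  (A pair `(a, b)` has the
form `(a, f a + j)` with `j ∈ J` iff `b - f a ∈ J`.) -/
def amalgamation {A B : Type*} [Ring A] [Ring B] (f : A →+* B) (J : TwoSidedIdeal B) :
    Subring (A × B) where
  carrier := {p | p.2 - f p.1 ∈ J}
  zero_mem' := by simp [J.zero_mem]
  one_mem' := by simp [J.zero_mem]
  add_mem' := by
    intro x y hx hy
    have e : (x + y).2 - f ((x + y).1) = (x.2 - f x.1) + (y.2 - f y.1) := by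
      simp only [Prod.snd_add, Prod.fst_add, map_add]; abel
    show (x + y).2 - f ((x + y).1) ∈ J
    rw [e]; exact J.add_mem hx hy
  neg_mem' := by
    intro x hx
    have e : (-x).2 - f ((-x).1) = -(x.2 - f x.1) := by
      simp only [Prod.snd_neg, Prod.fst_neg, map_neg]; abel
    show (-x).2 - f ((-x).1) ∈ J
    rw [e]; exact J.neg_mem hx
  mul_mem' := by
    intro x y hx hy
    have e : (x * y).2 - f ((x * y).1) = x.2 * (y.2 - f y.1) + (x.2 - f x.1) * f y.1 := by
      simp only [Prod.snd_mul, Prod.fst_mul, map_mul, mul_sub, sub_mul]; abel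
    show (x * y).2 - f ((x * y).1) ∈ J
    rw [e]; exact J.add_mem (J.mul_mem_left _ _ hy) (J.mul_mem_right _ _ hx)

/-- The subring `f(A) + J = {f a + j | a ∈ A, j ∈ J}` of `B`.  (An element `b` has the form
`f a + j` with `j ∈ J` iff `b - f a ∈ J` for some `a`.) -/
def imageAddIdeal {A B : Type*} [Ring A] [Ring B] (f : A →+* B) (J : TwoSidedIdeal B) :
    Subring B where
  carrier := {b | ∃ a : A, b - f a ∈ J}
  zero_mem' := ⟨0, by simp [J.zero_mem]⟩
  one_mem' := ⟨1, by simp [J.zero_mem]⟩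
  add_mem' := by
    rintro x y ⟨a, ha⟩ ⟨b, hb⟩
    refine ⟨a + b, ?_⟩
    have e : x + y - f (a + b) = (x - f a) + (y - f b) := by
      rw [map_add]; abel
    rw [e]; exact J.add_mem ha hb
  neg_mem' := by
    rintro x ⟨a, ha⟩
    refine ⟨-a, ?_⟩
    have e : -x - f (-a) = -(x - f a) := by rw [map_neg]; abel
    rw [e]; exact J.neg_mem ha
  mul_mem' := by
    rintro x y ⟨a, ha⟩ ⟨b, hb⟩
    refine ⟨a * b, ?_⟩
    have e : x * y - f (a * b) = x * (y - f b) + (x - f a) * f b := by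
      rw [map_mul, mul_sub, sub_mul]; abel
    rw [e]; exact J.add_mem (J.mul_mem_left _ _ hb) (J.mul_mem_right _ _ ha)

/-
Write `I = f⁻¹(J)`. If `P * Q = 0` over `A ⋈^f J` and `(x, y)` is the product of a coefficient
of `P` and one of `Q`, projecting to `f(A) + J` shows that `y` is nilpotent, and `y ^ n = 0`
forces `x ^ n ∈ I`. In a semicommutative ideal the nilpotent elements are closed under sums and
under multiplication by elements of `I`, so the classical proof that reduced rings are
Armendariz, run modulo these nilpotents, shows that `p.coeff i * q.coeff j` is nilpotent
whenever `p * q = 0` and all coefficients lie in `I`. Applied to `C (x ^ n) * P₁` and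
`Q₁ * C (x ^ n)`, where `P₁`, `Q₁` are the first projections, it makes `x ^ (2n + 1)`, hence `x`,
nilpotent.
-/
open Finset.HasAntidiagonal

theorem isNilpotent_mul_comm {M : Type*} [MonoidWithZero M] {a b : M} :
    IsNilpotent (a * b) ↔ IsNilpotent (b * a) := by
  suffices h : ∀ a b : M, IsNilpotent (a * b) → IsNilpotent (b * a) from ⟨h a b, h b a⟩
  rintro a b ⟨n, hn⟩
  exact ⟨n + 1, by rw [pow_succ', mul_assoc, ← mul_pow_mul, hn, zero_mul, mul_zero]⟩

theorem Prod.isNilpotent_iff {M N : Type*} [MonoidWithZero M] [MonoidWithZero N] {x : M × N} :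
    IsNilpotent x ↔ IsNilpotent x.1 ∧ IsNilpotent x.2 := by
  refine ⟨fun ⟨n, hn⟩ ↦ ⟨⟨n, by simpa using congrArg Prod.fst hn⟩,
    ⟨n, by simpa using congrArg Prod.snd hn⟩⟩, ?_⟩
  rintro ⟨⟨m, hm⟩, ⟨n, hn⟩⟩
  exact ⟨m + n, Prod.ext (by simpa using pow_eq_zero_of_le (by omega) hm)
    (by simpa using pow_eq_zero_of_le (by omega) hn)⟩

theorem Polynomial.map_mul_map_eq_zero {R S : Type*} [Ring R] [Ring S] (φ : R →+* S)
    {p q : R[X]} (hpq : p * q = 0) : p.map φ * q.map φ = 0 := by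
  rw [← Polynomial.map_mul, hpq, Polynomial.map_zero]

namespace TwoSidedIdeal

variable {R : Type*} [Ring R] {I : TwoSidedIdeal R}

theorem pow_mem {x : R} (hx : x ∈ I) {n : ℕ} (hn : n ≠ 0) : x ^ n ∈ I := by
  obtain ⟨n, rfl⟩ := Nat.exists_eq_succ_of_ne_zero hn
  rw [pow_succ]
  exact I.mul_mem_left _ _ hx

variable (I) in
def IsSemicommutative : Prop :=
  ∀ a ∈ I, ∀ b ∈ I, a * b = 0 → ∀ c ∈ I, a * c * b = 0

namespace IsSemicommutative

theorem mul_mul_pow_eq_zero (hI : I.IsSemicommutative) {θ u : R} (hθ : θ ∈ I) (hu : u ∈ I) :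
    ∀ {y : R} (j : ℕ), y ∈ I → y * u ^ j = 0 → y * (θ * u) ^ j = 0
  | _, 0, _, h => by rwa [pow_zero] at h ⊢
  | y, j + 1, hy, h => by
    have h' : y * θ * u * u ^ j = 0 := by
      rw [mul_assoc _ u, ← pow_succ']
      exact hI y hy _ (pow_mem hu j.succ_ne_zero) h θ hθ
    rw [pow_succ', ← mul_assoc, ← mul_assoc]
    exact mul_mul_pow_eq_zero hI hθ hu j (I.mul_mem_left _ _ hu) h'

-- Each word of length `j + l` in `u` and `v` has at least `j` letters `u` or `l` letters `v`;
-- semicommutativity lets `y * u ^ j = 0` absorb the letters `v` between them, and symmetrically.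
theorem mul_add_pow_eq_zero (hI : I.IsSemicommutative) {u v : R} (hu : u ∈ I) (hv : v ∈ I) :
    ∀ {y : R} (j l : ℕ), y ∈ I → y * u ^ j = 0 → y * v ^ l = 0 → y * (u + v) ^ (j + l) = 0
  | _, 0, _, _, h, _ | _, _, 0, _, _, h => by
    rw [pow_zero, mul_one] at h
    rw [h, zero_mul]
  | y, j + 1, l + 1, hy, hj, hl => by
    have hyu : y * u * u ^ j = 0 := by rwa [mul_assoc, ← pow_succ']
    have hyv : y * v * v ^ l = 0 := by rwa [mul_assoc, ← pow_succ']
    have hyuv : y * u * v ^ (l + 1) = 0 := hI y hy _ (pow_mem hv l.succ_ne_zero) hl u hu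
    have hyvu : y * v * u ^ (j + 1) = 0 := hI y hy _ (pow_mem hu j.succ_ne_zero) hj v hv
    calc y * (u + v) ^ (j + 1 + (l + 1))
        = y * u * (u + v) ^ (j + (l + 1)) + y * v * (u + v) ^ (j + 1 + l) := by
          rw [show j + 1 + (l + 1) = j + (l + 1) + 1 by omega,
            show j + 1 + l = j + (l + 1) by omega, pow_succ', ← mul_assoc, mul_add, add_mul]
      _ = 0 := by
          rw [mul_add_pow_eq_zero hI hu hv j (l + 1) (I.mul_mem_left _ _ hu) hyu hyuv,
            mul_add_pow_eq_zero hI hu hv (j + 1) l (I.mul_mem_left _ _ hv) hyvu hyv, add_zero]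

theorem isNilpotent_add (hI : I.IsSemicommutative) {u v : R} (hu : u ∈ I) (hv : v ∈ I)
    (hun : IsNilpotent u) (hvn : IsNilpotent v) : IsNilpotent (u + v) := by
  obtain ⟨m, hm⟩ := hun
  obtain ⟨n, hn⟩ := hvn
  have hu0 := hI.mul_add_pow_eq_zero hu hv m n hu (by rw [hm, mul_zero]) (by rw [hn, mul_zero])
  have hv0 := hI.mul_add_pow_eq_zero hu hv m n hv (by rw [hm, mul_zero]) (by rw [hn, mul_zero])
  exact ⟨m + n + 1, by rw [pow_succ', add_mul, hu0, hv0, add_zero]⟩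

theorem isNilpotent_mul_left (hI : I.IsSemicommutative) {θ u : R} (hθ : θ ∈ I) (hu : u ∈ I)
    (hun : IsNilpotent u) : IsNilpotent (θ * u) := by
  obtain ⟨m, hm⟩ := hun
  have h := hI.mul_mul_pow_eq_zero hθ hu m hu (by rw [hm, mul_zero])
  exact ⟨m + 1, by rw [pow_succ', mul_assoc, h, mul_zero]⟩

def nilpotentElements (hI : I.IsSemicommutative) : AddSubgroup R where
  carrier := {x | x ∈ I ∧ IsNilpotent x}
  zero_mem' := ⟨I.zero_mem, .zero⟩
  add_mem' := fun ⟨ha, ha'⟩ ⟨hb, hb'⟩ ↦ ⟨I.add_mem ha hb, hI.isNilpotent_add ha hb ha' hb'⟩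
  neg_mem' := fun ⟨ha, ha'⟩ ↦ ⟨I.neg_mem ha, ha'.neg⟩

theorem mul_mem_left (hI : I.IsSemicommutative) {r x : R} (hr : r ∈ I)
    (hx : x ∈ hI.nilpotentElements) :
    r * x ∈ hI.nilpotentElements :=
  ⟨I.mul_mem_left _ _ hx.1, hI.isNilpotent_mul_left hr hx.1 hx.2⟩

theorem mul_mem_right (hI : I.IsSemicommutative) {r x : R} (hx : x ∈ hI.nilpotentElements)
    (hr : r ∈ I) :
    x * r ∈ hI.nilpotentElements :=
  ⟨I.mul_mem_right _ _ hx.1, isNilpotent_mul_comm.mp (hI.isNilpotent_mul_left hr hx.1 hx.2)⟩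

theorem mul_comm_mem (hI : I.IsSemicommutative) {x y : R} (hx : x ∈ I)
    (hxy : x * y ∈ hI.nilpotentElements) :
    y * x ∈ hI.nilpotentElements :=
  ⟨I.mul_mem_left _ _ hx, isNilpotent_mul_comm.mp hxy.2⟩

variable {p q : R[X]}

theorem coeff_mul_coeff_mem_nilpotentElements_of_lt (hI : I.IsSemicommutative)
    (hp : ∀ i, p.coeff i ∈ I) (hq : ∀ j, q.coeff j ∈ I) (hpq : p * q = 0) {i j : ℕ}
    (hlt_i : ∀ a < i, ∀ b, p.coeff a * q.coeff b ∈ hI.nilpotentElements)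
    (hlt_j : ∀ b < j, p.coeff i * q.coeff b ∈ hI.nilpotentElements) :
    p.coeff i * q.coeff j ∈ hI.nilpotentElements := by
  have hij : (i, j) ∈ antidiagonal (i + j) := mem_antidiagonal.mpr rfl
  have hsum : ∑ x ∈ antidiagonal (i + j), p.coeff x.1 * q.coeff x.2 * p.coeff i = 0 := by
    rw [← Finset.sum_mul, ← coeff_mul, hpq, coeff_zero, zero_mul]
  have hrest : ∑ x ∈ (antidiagonal (i + j)).erase (i, j), p.coeff x.1 * q.coeff x.2 * p.coeff i
      ∈ hI.nilpotentElements := by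
    refine sum_mem fun ⟨a, b⟩ hab ↦ ?_
    obtain ⟨hne, hab⟩ := Finset.mem_erase.mp hab
    rw [mem_antidiagonal] at hab
    rcases lt_trichotomy a i with ha | rfl | ha
    · exact hI.mul_mem_right (hlt_i a ha b) (hp i)
    · exact absurd (by rw [show b = j by omega]) hne
    · rw [mul_assoc]
      exact hI.mul_mem_left (hp a) (hI.mul_comm_mem (hp i) (hlt_j b (by omega)))
  have hcube : p.coeff i * q.coeff j * p.coeff i ∈ hI.nilpotentElements := by
    rw [eq_neg_of_add_eq_zero_left ((Finset.add_sum_erase _ _ hij).trans hsum)]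
    exact hI.nilpotentElements.neg_mem hrest
  refine ⟨I.mul_mem_right _ _ (hp i), IsNilpotent.of_pow (m := 2) ?_⟩
  rw [pow_two, ← mul_assoc]
  exact (hI.mul_mem_right hcube (hq j)).2

theorem coeff_mul_coeff_mem_nilpotentElements (hI : I.IsSemicommutative)
    (hp : ∀ i, p.coeff i ∈ I) (hq : ∀ j, q.coeff j ∈ I) (hpq : p * q = 0) (i j : ℕ) :
    p.coeff i * q.coeff j ∈ hI.nilpotentElements := by
  induction i using Nat.strong_induction_on generalizing j with
  | _ i ih_i =>
    induction j using Nat.strong_induction_on with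
    | _ j ih_j =>
      exact hI.coeff_mul_coeff_mem_nilpotentElements_of_lt hp hq hpq ih_i ih_j

theorem isNilpotent_coeff_mul_coeff (hI : I.IsSemicommutative) (hpq : p * q = 0) {i j n : ℕ}
    (hn : (p.coeff i * q.coeff j) ^ n ∈ I) :
    IsNilpotent (p.coeff i * q.coeff j) := by
  set x := p.coeff i * q.coeff j
  have key := hI.coeff_mul_coeff_mem_nilpotentElements (p := C (x ^ n) * p) (q := q * C (x ^ n))
    (fun k ↦ by rw [coeff_C_mul]; exact I.mul_mem_right _ _ hn)
    (fun k ↦ by rw [coeff_mul_C]; exact I.mul_mem_left _ _ hn)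
    (by rw [mul_assoc, ← mul_assoc p, hpq, zero_mul, mul_zero]) i j
  rw [coeff_C_mul, coeff_mul_C] at key
  refine IsNilpotent.of_pow (m := n + 1 + n) ?_
  rw [pow_add, pow_succ]
  simpa only [x, mul_assoc] using key.2

end IsSemicommutative

end TwoSidedIdeal

section Amalgamation

variable {A B : Type*} [Ring A] [Ring B] (f : A →+* B) (J : TwoSidedIdeal B)

def amalgamation.fst : amalgamation f J →+* A :=
  (RingHom.fst A B).comp (amalgamation f J).subtype

def amalgamation.snd : amalgamation f J →+* imageAddIdeal f J :=
  ((RingHom.snd A B).comp (amalgamation f J).subtype).codRestrict _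
    fun x ↦ ⟨(x : A × B).1, x.2⟩

@[simp]
theorem amalgamation.fst_apply (x : amalgamation f J) : amalgamation.fst f J x = (x : A × B).1 :=
  rfl

@[simp]
theorem amalgamation.coe_snd_apply (x : amalgamation f J) :
    (amalgamation.snd f J x : B) = (x : A × B).2 :=
  rfl

variable {f J}

theorem amalgamation.pow_fst_mem_comap {z : A × B} (hz : z ∈ amalgamation f J) {n : ℕ}
    (hn : z.2 ^ n = 0) : z.1 ^ n ∈ J.comap f := by
  have h : (z ^ n).2 - f (z ^ n).1 ∈ J := (amalgamation f J).pow_mem hz n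
  rwa [Prod.pow_snd, hn, zero_sub, neg_mem_iff, Prod.pow_fst, ← TwoSidedIdeal.mem_comap f] at h

end Amalgamation

theorem stmt_19_general {A B : Type*} [Ring A] [Ring B] (f : A →+* B) (J : TwoSidedIdeal B)
    (hsc : ∀ a b : A, f a ∈ J → f b ∈ J → a * b = 0 → ∀ c : A, f c ∈ J → a * c * b = 0)
    (hB : IsWeakArmendariz (imageAddIdeal f J)) :
    IsWeakArmendariz (amalgamation f J) := by
  intro P Q hPQ i j
  have hI : (J.comap f).IsSemicommutative := fun a ha b hb hab c hc ↦
    hsc a b ((J.mem_comap f).mp ha) ((J.mem_comap f).mp hb) hab c ((J.mem_comap f).mp hc)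
  obtain ⟨n, hn⟩ : IsNilpotent (P.coeff i * Q.coeff j : A × B).2 := by
    simpa [coeff_map] using (hB _ _ (map_mul_map_eq_zero (amalgamation.snd f J) hPQ) i j).map
      (imageAddIdeal f J).subtype
  have hfst : IsNilpotent (P.coeff i * Q.coeff j : A × B).1 := by
    simpa [coeff_map] using hI.isNilpotent_coeff_mul_coeff
      (map_mul_map_eq_zero (amalgamation.fst f J) hPQ) (i := i) (j := j) (n := n)
      (by simpa [coeff_map] using amalgamation.pow_fst_mem_comap (P.coeff i * Q.coeff j).2 hn)
  rw [← IsNilpotent.map_iff (amalgamation f J).subtype_injective]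
  exact Prod.isNilpotent_iff.mpr ⟨hfst, n, hn⟩

theorem stmt_19 {A B : Type*} [Ring A] [Ring B] (f : A →+* B) (J : TwoSidedIdeal B)
    (hJ : (1 : B) ∉ J)
    (hsc : ∀ a b : A, f a ∈ J → f b ∈ J → a * b = 0 → ∀ c : A, f c ∈ J → a * c * b = 0)
    (hB : IsWeakArmendariz (imageAddIdeal f J)) :
    IsWeakArmendariz (amalgamation f J) :=
  stmt_19_general f J hsc hB
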